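/- For every x ∈ ℝ^d the random variable f(F_t(x, ·)) is integrable, the function u(x) := 𝔼[ f(F_t(x, ·)) ] is differentiable on ℝ^d, and its gradient admits the representation ∇u(x) = 𝔼[ S_t(x, ·)ᵀ ∇f(F_t(x, ·)) ] (that is, ∇P^t f = Q^t ∇f, where Q^t g(x) := 𝔼[ S_t(x,·)ᵀ g(F_t(x,·)) ]). -/

import Mathlib

/-!
By the chain rule the Jacobian `S_t(x, ω)` of the flow is a product of `t` one-step Jacobians, so
`‖S_t‖ ≤ L ^ t`. Hence `x ↦ f (F_t(x, ω))` is `C L ^ t`-Lipschitz uniformly in `ω`: integrability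
at `x₀` propagates to every `x`, and the constant `C L ^ t` dominates the derivatives, so one may
differentiate under the expectation. Riesz duality turns the resulting Fréchet derivative
`𝔼[Df(F_t) ∘ S_t]` into the gradient `𝔼[S_tᵀ ∇f(F_t)]`.
-/

open MeasureTheory

def rflow {E M Ω : Type*} (a : E → M → E) (N : ℕ → Ω → M) : ℕ → E → Ω → E
  | 0 => fun x _ => x
  | s + 1 => fun x ω => a (rflow a N s x ω) (N (s + 1) ω)

open InnerProductSpace

section Differentiation

variable {E M Ω : Type*} [NormedAddCommGroup E] [NormedSpace ℝ E] {a : E → M → E}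
  {N : ℕ → Ω → M}

theorem differentiable_rflow (ha : ∀ n, Differentiable ℝ (a · n)) (s : ℕ) (ω : Ω) :
    Differentiable ℝ (rflow a N s · ω) := by
  induction s with
  | zero => exact differentiable_id
  | succ s ih => exact (ha _).comp ih

theorem fderiv_rflow_zero (ω : Ω) (x : E) :
    fderiv ℝ (rflow a N 0 · ω) x = ContinuousLinearMap.id ℝ E :=
  fderiv_id

theorem fderiv_rflow_succ (ha : ∀ n, Differentiable ℝ (a · n)) (s : ℕ) (ω : Ω) (x : E) :
    fderiv ℝ (rflow a N (s + 1) · ω) x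
      = (fderiv ℝ (a · (N (s + 1) ω)) (rflow a N s x ω)).comp
          (fderiv ℝ (rflow a N s · ω) x) :=
  fderiv_comp x (ha _ _) (differentiable_rflow ha s ω x)

theorem norm_fderiv_rflow_le (ha : ∀ n, Differentiable ℝ (a · n)) {L : ℝ}
    (hL : ∀ x n, ‖fderiv ℝ (a · n) x‖ ≤ L) (s : ℕ) (ω : Ω) (x : E) :
    ‖fderiv ℝ (rflow a N s · ω) x‖ ≤ L ^ s := by
  induction s with
  | zero => simpa only [fderiv_rflow_zero, pow_zero] using ContinuousLinearMap.norm_id_le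
  | succ s ih =>
    rw [fderiv_rflow_succ ha, pow_succ']
    have hstep := hL (rflow a N s x ω) (N (s + 1) ω)
    exact (ContinuousLinearMap.opNorm_comp_le _ _).trans
      (mul_le_mul hstep ih (norm_nonneg _) ((norm_nonneg _).trans hstep))

theorem norm_rflow_sub_le (ha : ∀ n, Differentiable ℝ (a · n)) {L : ℝ}
    (hL : ∀ x n, ‖fderiv ℝ (a · n) x‖ ≤ L) (s : ℕ) (ω : Ω) (x y : E) :
    ‖rflow a N s x ω - rflow a N s y ω‖ ≤ L ^ s * ‖x - y‖ :=
  convex_univ.norm_image_sub_le_of_norm_fderiv_le (fun z _ => differentiable_rflow ha s ω z)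
    (fun z _ => norm_fderiv_rflow_le ha hL s ω z) trivial trivial

end Differentiation

section Measurability

variable {E M Ω : Type*} [MeasurableSpace E] [MeasurableSpace M] [MeasurableSpace Ω]
  {a : E → M → E} {N : ℕ → Ω → M}

theorem measurable_rflow (hameas : Measurable fun p : E × M => a p.1 p.2)
    (hN : ∀ s, Measurable (N s)) (s : ℕ) (x : E) : Measurable (rflow a N s x) := by
  induction s with
  | zero => exact measurable_const
  | succ s ih => exact hameas.comp (ih.prodMk (hN (s + 1)))

theorem measurable_fderiv_rflow [NormedAddCommGroup E] [NormedSpace ℝ E] [FiniteDimensional ℝ E]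
    [BorelSpace E] (ha : ∀ n, Differentiable ℝ (a · n))
    (hameas : Measurable fun p : E × M => a p.1 p.2) (hN : ∀ s, Measurable (N s))
    (hDmeas : Measurable fun p : E × M => fderiv ℝ (a · p.2) p.1) (s : ℕ) (x : E) :
    Measurable fun ω => fderiv ℝ (rflow a N s · ω) x := by
  induction s with
  | zero => simpa only [fderiv_rflow_zero] using measurable_const
  | succ s ih =>
    simp only [fderiv_rflow_succ ha]
    have hstep : Measurable fun ω => fderiv ℝ (a · (N (s + 1) ω)) (rflow a N s x ω) :=
      hDmeas.comp ((measurable_rflow hameas hN s x).prodMk (hN (s + 1)))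
    exact (isBoundedBilinearMap_comp (𝕜 := ℝ)).continuous.measurable.comp (hstep.prodMk ih)

end Measurability

section Expectation

variable {E M Ω : Type*} [NormedAddCommGroup E] [NormedSpace ℝ E] [MeasurableSpace E]
  [BorelSpace E] [MeasurableSpace M] [MeasurableSpace Ω] {μ : Measure Ω} [IsFiniteMeasure μ]
  {a : E → M → E} {N : ℕ → Ω → M} {f : E → ℝ} {L C : ℝ}

theorem integrable_comp_rflow (ha : ∀ n, Differentiable ℝ (a · n))
    (hameas : Measurable fun p : E × M => a p.1 p.2) (hN : ∀ s, Measurable (N s))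
    (hL : ∀ x n, ‖fderiv ℝ (a · n) x‖ ≤ L) (hf : Differentiable ℝ f)
    (hfC : ∀ y, ‖fderiv ℝ f y‖ ≤ C) {t : ℕ} {x₀ : E}
    (hx₀ : Integrable (fun ω => f (rflow a N t x₀ ω)) μ) (x : E) :
    Integrable (fun ω => f (rflow a N t x ω)) μ := by
  have hC : 0 ≤ C := (norm_nonneg _).trans (hfC 0)
  refine integrable_of_norm_sub_le
    (hf.continuous.measurable.comp (measurable_rflow hameas hN t x)).aestronglyMeasurable hx₀
    (integrable_const (C * (L ^ t * ‖x₀ - x‖))) (ae_of_all _ fun ω => ?_)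
  calc ‖f (rflow a N t x₀ ω) - f (rflow a N t x ω)‖
      ≤ C * ‖rflow a N t x₀ ω - rflow a N t x ω‖ :=
        convex_univ.norm_image_sub_le_of_norm_fderiv_le (fun y _ => hf y) (fun y _ => hfC y)
          trivial trivial
    _ ≤ C * (L ^ t * ‖x₀ - x‖) := by gcongr; exact norm_rflow_sub_le ha hL t ω x₀ x

theorem hasFDerivAt_integral_comp_rflow [FiniteDimensional ℝ E]
    (ha : ∀ n, Differentiable ℝ (a · n))
    (hameas : Measurable fun p : E × M => a p.1 p.2) (hN : ∀ s, Measurable (N s))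
    (hDmeas : Measurable fun p : E × M => fderiv ℝ (a · p.2) p.1)
    (hL : ∀ x n, ‖fderiv ℝ (a · n) x‖ ≤ L) (hf : Differentiable ℝ f)
    (hfC : ∀ y, ‖fderiv ℝ f y‖ ≤ C) {t : ℕ}
    (hint : ∀ x, Integrable (fun ω => f (rflow a N t x ω)) μ) (x : E) :
    HasFDerivAt (fun x => ∫ ω, f (rflow a N t x ω) ∂μ)
      (∫ ω, (fderiv ℝ f (rflow a N t x ω)).comp (fderiv ℝ (rflow a N t · ω) x) ∂μ) x := by
  have hC : 0 ≤ C := (norm_nonneg _).trans (hfC 0)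
  have hmeas : Measurable fun ω =>
      (fderiv ℝ f (rflow a N t x ω)).comp (fderiv ℝ (rflow a N t · ω) x) :=
    (isBoundedBilinearMap_comp (𝕜 := ℝ)).continuous.measurable.comp
      (((measurable_fderiv ℝ f).comp (measurable_rflow hameas hN t x)).prodMk
        (measurable_fderiv_rflow ha hameas hN hDmeas t x))
  refine hasFDerivAt_integral_of_dominated_of_fderiv_le (s := Set.univ) Filter.univ_mem
    (Filter.Eventually.of_forall fun y => (hint y).aestronglyMeasurable) (hint x)
    hmeas.aestronglyMeasurable (ae_of_all _ fun ω y _ => ?_) (integrable_const (C * L ^ t))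
    (ae_of_all _ fun ω y _ =>
      (hf _).hasFDerivAt.comp y (differentiable_rflow ha t ω y).hasFDerivAt)
  exact (ContinuousLinearMap.opNorm_comp_le _ _).trans
    (mul_le_mul (hfC _) (norm_fderiv_rflow_le ha hL t ω y) (norm_nonneg _) hC)

end Expectation

theorem InnerProductSpace.toDual_symm_comp {E F : Type*} [NormedAddCommGroup E]
    [InnerProductSpace ℝ E] [CompleteSpace E] [NormedAddCommGroup F] [InnerProductSpace ℝ F]
    [CompleteSpace F] (ℓ : StrongDual ℝ F) (S : E →L[ℝ] F) :
    (toDual ℝ E).symm (ℓ.comp S) = S.adjoint ((toDual ℝ F).symm ℓ) :=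
  ext_inner_right ℝ fun v => by
    rw [toDual_symm_apply, ContinuousLinearMap.adjoint_inner_left, toDual_symm_apply]
    rfl

theorem InnerProductSpace.toDual_symm_integral {E Ω : Type*} [NormedAddCommGroup E]
    [InnerProductSpace ℝ E] [CompleteSpace E] [MeasurableSpace Ω] (μ : Measure Ω)
    (φ : Ω → StrongDual ℝ E) :
    (toDual ℝ E).symm (∫ ω, φ ω ∂μ) = ∫ ω, (toDual ℝ E).symm (φ ω) ∂μ :=
  ((toDual ℝ E).symm.toContinuousLinearEquiv.integral_comp_comm φ).symm

theorem gradient_of_expected_value_representation_general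
    {Ω : Type*} [MeasurableSpace Ω] (ℙ : Measure Ω) [IsProbabilityMeasure ℙ]
    (d m : ℕ) (t : ℕ)
    (N : ℕ → Ω → Fin m → ℝ) (hN : ∀ s, Measurable (N s))
    (L : ℝ)
    (a : EuclideanSpace ℝ (Fin d) → (Fin m → ℝ) → EuclideanSpace ℝ (Fin d))
    (hameas : Measurable fun p : EuclideanSpace ℝ (Fin d) × (Fin m → ℝ) => a p.1 p.2)
    (haC1 : ∀ n, ContDiff ℝ 1 (fun x => a x n))
    (hDmeas : Measurable fun p : EuclideanSpace ℝ (Fin d) × (Fin m → ℝ) =>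
      fderiv ℝ (fun x => a x p.2) p.1)
    (hL : ∀ x n, ‖fderiv ℝ (fun y => a y n) x‖ ≤ L)
    (f : EuclideanSpace ℝ (Fin d) → ℝ) (hf : ContDiff ℝ 1 f)
    (C : ℝ) (hfC : ∀ y, ‖gradient f y‖ ≤ C)
    (hint0 : ∃ x₀, Integrable (fun ω => f (rflow a N t x₀ ω)) ℙ) :
    (∀ x, Integrable (fun ω => f (rflow a N t x ω)) ℙ) ∧
    Differentiable ℝ (fun x => ∫ ω, f (rflow a N t x ω) ∂ℙ) ∧
    ∀ x, gradient (fun x => ∫ ω, f (rflow a N t x ω) ∂ℙ) x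
      = ∫ ω, ContinuousLinearMap.adjoint (fderiv ℝ (fun y => rflow a N t y ω) x)
          (gradient f (rflow a N t x ω)) ∂ℙ := by
  obtain ⟨x₀, hx₀⟩ := hint0
  have ha n := (haC1 n).differentiable one_ne_zero
  have hfd : ∀ y, ‖fderiv ℝ f y‖ ≤ C := fun y => by
    simpa only [gradient, LinearIsometryEquiv.norm_map] using hfC y
  have hint := integrable_comp_rflow ha hameas hN hL (hf.differentiable one_ne_zero) hfd hx₀
  have hderiv :=
    hasFDerivAt_integral_comp_rflow ha hameas hN hDmeas hL (hf.differentiable one_ne_zero) hfd hint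
  refine ⟨hint, fun x => (hderiv x).differentiableAt, fun x => ?_⟩
  rw [(hderiv x).hasGradientAt.gradient, toDual_symm_integral]
  simp only [toDual_symm_comp, gradient]

/-- `f(F_t(x,·))` is integrable, `u(x) = 𝔼[f(F_t(x,·))]` is differentiable,
and `∇u(x) = 𝔼[S_t(x,·)ᵀ ∇f(F_t(x,·))]`, where `S_t(x,ω)` is the Jacobian of `F_t(·,ω)`
at `x` (i.e. `∇P^t f = Q^t ∇f`). -/
theorem gradient_of_expected_value_representation
    {Ω : Type*} [MeasurableSpace Ω] (ℙ : Measure Ω) [IsProbabilityMeasure ℙ]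
    (d m : ℕ) (t : ℕ) (ht : 1 ≤ t)
    (N : ℕ → Ω → Fin m → ℝ) (hN : ∀ s, Measurable (N s))
    (L : ℝ)
    (a : EuclideanSpace ℝ (Fin d) → (Fin m → ℝ) → EuclideanSpace ℝ (Fin d))
    (hameas : Measurable fun p : EuclideanSpace ℝ (Fin d) × (Fin m → ℝ) => a p.1 p.2)
    (haC1 : ∀ n, ContDiff ℝ 1 (fun x => a x n))
    (hDmeas : Measurable fun p : EuclideanSpace ℝ (Fin d) × (Fin m → ℝ) =>
      fderiv ℝ (fun x => a x p.2) p.1)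
    (hL : ∀ x n, ‖fderiv ℝ (fun y => a y n) x‖ ≤ L)
    (f : EuclideanSpace ℝ (Fin d) → ℝ) (hf : ContDiff ℝ 1 f)
    (C : ℝ) (hfC : ∀ y, ‖gradient f y‖ ≤ C)
    (hint0 : ∃ x₀, Integrable (fun ω => f (rflow a N t x₀ ω)) ℙ) :
    (∀ x, Integrable (fun ω => f (rflow a N t x ω)) ℙ) ∧
    Differentiable ℝ (fun x => ∫ ω, f (rflow a N t x ω) ∂ℙ) ∧
    ∀ x, gradient (fun x => ∫ ω, f (rflow a N t x ω) ∂ℙ) x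
      = ∫ ω, ContinuousLinearMap.adjoint (fderiv ℝ (fun y => rflow a N t y ω) x)
          (gradient f (rflow a N t x ω)) ∂ℙ :=
  gradient_of_expected_value_representation_general ℙ d m t N hN L a hameas haC1 hDmeas hL f hf C
    hfC hint0
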